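/- arXiv:2401.10497 — 3 statements merged into one kernel-verified Lean document; each statement's English description precedes it below -/
import Mathlib

section
/- For every positive integer x, ∑_{m ≤ x} log(rad m) = x log x + O(x), where rad m denotes the radical (product of distinct prime divisors) of m. -/
def rad (n : ℕ) : ℕ := ∏ p ∈ n.primeFactors, p

/-!
Write `log m = ∑ₚ vₚ(m) log p` and `log (rad m) = ∑_{p ∣ m} log p`. Summed over `m ≤ x` these give
`log x! = ∑_{p ≤ x} vₚ(x!) log p` and `∑_{m ≤ x} log (rad m) = ∑_{p ≤ x} ⌊x/p⌋ log p`. By Legendre,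
`vₚ(x!) - ⌊x/p⌋ = vₚ(⌊x/p⌋!) ≤ x / (p (p - 1))`, so the two sums differ by at most
`x ∑ₚ log p / (p (p - 1)) = O(x)`. Stirling gives `log x! ≥ x log x - x`, and `rad m ≤ m ≤ x`
gives the upper bound.
-/

open Finset Real
open scoped Nat

theorem rad_pos (n : ℕ) : 0 < rad n :=
  prod_pos fun _ hp => (Nat.prime_of_mem_primeFactors hp).pos

theorem rad_le_self {n : ℕ} (hn : n ≠ 0) : rad n ≤ n :=
  Nat.le_of_dvd (Nat.pos_of_ne_zero hn) (Nat.prod_primeFactors_dvd n)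

theorem log_rad (n : ℕ) : log (rad n) = ∑ p ∈ n.primeFactors, log p := by
  rw [rad, Nat.cast_prod, log_prod]
  exact fun p hp => Nat.cast_ne_zero.2 (Nat.prime_of_mem_primeFactors hp).ne_zero

theorem sum_log_rad_le (x : ℕ) : ∑ m ∈ Icc 1 x, log (rad m) ≤ x * log x := by
  calc ∑ m ∈ Icc 1 x, log (rad m) ≤ ∑ _m ∈ Icc 1 x, log x := by
        refine sum_le_sum fun m hm => ?_
        obtain ⟨hm1, hmx⟩ := mem_Icc.1 hm
        exact log_le_log (by exact_mod_cast rad_pos m)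
          (by exact_mod_cast (rad_le_self (by omega)).trans hmx)
    _ = x * log x := by rw [sum_const, Nat.card_Icc, add_tsub_cancel_right, nsmul_eq_mul]

theorem sum_log_rad_eq (x : ℕ) :
    ∑ m ∈ Icc 1 x, log (rad m) = ∑ p ∈ Nat.primesLE x, log p * (x / p : ℕ) := by
  simp_rw [log_rad]
  rw [sum_comm' (t' := Nat.primesLE x) (s' := fun p => {m ∈ Icc 1 x | p ∣ m})]
  · refine sum_congr rfl fun p _ => ?_
    rw [sum_const, show Icc 1 x = Ioc 0 x from rfl, Nat.Ioc_filter_dvd_card_eq_div, nsmul_eq_mul,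
      mul_comm]
  · intro m p
    simp only [mem_Icc, Nat.mem_primeFactors, mem_filter, Nat.mem_primesLE]
    constructor
    · rintro ⟨⟨hm1, hmx⟩, hp, hpm, -⟩
      exact ⟨⟨⟨hm1, hmx⟩, hpm⟩, (Nat.le_of_dvd hm1 hpm).trans hmx, hp⟩
    · rintro ⟨⟨⟨hm1, hmx⟩, hpm⟩, -, hp⟩
      exact ⟨⟨hm1, hmx⟩, hp, hpm, by omega⟩

theorem log_factorial_eq_sum (x : ℕ) :
    log x ! = ∑ p ∈ Nat.primesLE x, log p * padicValNat p x ! := by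
  rw [log_nat_eq_sum_factorization, Finsupp.sum_of_support_subset _ ?_ _ (by simp)]
  · refine sum_congr rfl fun p hp => ?_
    rw [Nat.factorization_def _ (Nat.prime_of_mem_primesLE hp), mul_comm]
  · intro p hp
    rw [Nat.support_factorization, Nat.mem_primeFactors] at hp
    exact Nat.mem_primesLE.2 ⟨hp.1.dvd_factorial.1 hp.2.1, hp.1⟩

theorem padicValNat_factorial_eq_div_add (p n : ℕ) [Fact p.Prime] :
    padicValNat p n ! = n / p + padicValNat p (n / p)! := by
  rw [← padicValNat_mul_div_factorial, padicValNat_factorial_mul, add_comm]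

theorem padicValNat_factorial_le_div_pred {p : ℕ} [hp : Fact p.Prime] (n : ℕ) :
    padicValNat p n ! ≤ n / (p - 1) := by
  rw [← Nat.factorization_def _ hp.out]
  exact Nat.factorization_factorial_le_div_pred hp.out n

theorem padicValNat_factorial_sub_div_le {p : ℕ} [hp : Fact p.Prime] (n : ℕ) :
    (padicValNat p n ! : ℝ) - (n / p : ℕ) ≤ n / (p * (p - 1)) := by
  rw [padicValNat_factorial_eq_div_add, Nat.cast_add, add_sub_cancel_left]
  calc (padicValNat p (n / p)! : ℝ) ≤ (n / p / (p - 1) : ℕ) := by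
        exact_mod_cast padicValNat_factorial_le_div_pred _
    _ = (n / (p * (p - 1)) : ℕ) := by rw [Nat.div_div_eq_div_mul]
    _ ≤ n / (p * (p - 1) : ℕ) := Nat.cast_div_le
    _ = n / (p * (p - 1)) := by rw [Nat.cast_mul, Nat.cast_pred hp.out.pos]

theorem log_div_mul_sub_one_nonneg (n : ℕ) : 0 ≤ log n / (n * (n - 1)) := by
  rcases n with _ | n
  · simp
  · refine div_nonneg (log_natCast_nonneg _) ?_
    push_cast
    rw [add_sub_cancel_right]
    positivity

theorem summable_log_div_mul_sub_one : Summable fun n : ℕ => log n / (n * (n - 1)) := by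
  refine .of_nonneg_of_le log_div_mul_sub_one_nonneg (fun n => ?_)
    ((summable_nat_rpow.2 (by norm_num : -(3 / 2 : ℝ) < -1)).mul_left 4)
  rcases lt_or_ge n 2 with hn | hn
  · interval_cases n <;> simp
  have hn2 : (2 : ℝ) ≤ n := by exact_mod_cast hn
  have hlog : log n ≤ 2 * (n : ℝ) ^ (1 / 2 : ℝ) := by
    have := log_le_rpow_div (Nat.cast_nonneg n) (by norm_num : (0 : ℝ) < 1 / 2)
    linarith
  have hden : (n : ℝ) ^ 2 / 2 ≤ n * (n - 1) := by nlinarith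
  calc log n / (n * (n - 1)) ≤ 2 * (n : ℝ) ^ (1 / 2 : ℝ) / ((n : ℝ) ^ 2 / 2) :=
        div_le_div₀ (by positivity) hlog (by positivity) hden
    _ = 4 * (n : ℝ) ^ (-(3 / 2) : ℝ) := by
        rw [show (-(3 / 2) : ℝ) = 1 / 2 - 2 by norm_num, rpow_sub (by positivity), rpow_two]
        ring

theorem log_factorial_sub_sum_log_rad_le (x : ℕ) :
    log x ! - ∑ m ∈ Icc 1 x, log (rad m) ≤ x * ∑' n : ℕ, log n / (n * (n - 1)) := by
  rw [log_factorial_eq_sum, sum_log_rad_eq, ← sum_sub_distrib]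
  calc ∑ p ∈ Nat.primesLE x, (log p * padicValNat p x ! - log p * (x / p : ℕ))
      ≤ ∑ p ∈ Nat.primesLE x, x * (log p / (p * (p - 1))) := by
        refine sum_le_sum fun p hp => ?_
        have : Fact p.Prime := ⟨Nat.prime_of_mem_primesLE hp⟩
        rw [← mul_sub, mul_div_left_comm]
        exact mul_le_mul_of_nonneg_left (padicValNat_factorial_sub_div_le x) (log_natCast_nonneg p)
    _ ≤ x * ∑' n : ℕ, log n / (n * (n - 1)) := by
        rw [← mul_sum]
        gcongr
        exact summable_log_div_mul_sub_one.sum_le_tsum _ fun n _ => log_div_mul_sub_one_nonneg n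

theorem mul_log_sub_le_log_factorial (n : ℕ) : n * log n - n ≤ log n ! := by
  rcases eq_or_ne n 0 with rfl | hn
  · simp
  have hstirling := Stirling.le_log_factorial_stirling hn
  have : 0 ≤ log (2 * π) := log_nonneg (by linarith [pi_gt_three])
  linarith [log_natCast_nonneg n]

theorem stmt_7 : ∃ C : ℝ, 0 < C ∧ ∀ x : ℕ, 1 ≤ x →
    |(∑ m ∈ Finset.Icc 1 x, Real.log (rad m)) - x * Real.log x| ≤ C * x := by
  set K := ∑' n : ℕ, log n / (n * (n - 1))
  have hK : 0 ≤ K := tsum_nonneg log_div_mul_sub_one_nonneg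
  refine ⟨K + 1, by positivity, fun x _ => abs_sub_le_iff.2 ⟨?_, ?_⟩⟩
  · have hx : 0 ≤ (K + 1) * x := by positivity
    linarith [sum_log_rad_le x]
  · linarith [log_factorial_sub_sum_log_rad_le x, mul_log_sub_le_log_factorial x]
end

section
/- The Dirichlet series of f(m) = m / rad(m) satisfies, for real s > 2, ∑_{n ≥ 1} f(n)/n^s = ∏_p (1 + 1/(p^s − p)), where the product is over all primes p. -/
lemma rad_dvd (n : ℕ) : rad n ∣ n := Nat.prod_primeFactors_dvd n

@[simp] lemma rad_one : rad 1 = 1 := by simp [rad]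

lemma rad_mul_of_coprime {m n : ℕ} (h : m.Coprime n) : rad (m * n) = rad m * rad n := by
  rw [rad, h.primeFactors_mul, Finset.prod_union h.disjoint_primeFactors, rad, rad]

lemma rad_prime_pow {p k : ℕ} (hp : p.Prime) (hk : k ≠ 0) : rad (p ^ k) = p := by
  simp [rad, Nat.primeFactors_prime_pow hk hp]

lemma div_rad_mul_of_coprime {m n : ℕ} (h : m.Coprime n) :
    m * n / rad (m * n) = (m / rad m) * (n / rad n) := by
  rw [rad_mul_of_coprime h, Nat.div_mul_div_comm (rad_dvd m) (rad_dvd n)]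

lemma prime_pow_succ_div_rad {p : ℕ} (hp : p.Prime) (k : ℕ) :
    p ^ (k + 1) / rad (p ^ (k + 1)) = p ^ k := by
  rw [rad_prime_pow hp k.succ_ne_zero, pow_succ, Nat.mul_div_cancel _ hp.pos]

lemma tsum_pow_div_pow_succ_rpow {x s : ℝ} (hx : 1 < x) (hs : 1 < s) :
    ∑' e : ℕ, x ^ e / (x ^ (e + 1)) ^ s = 1 / (x ^ s - x) := by
  have hx₀ : 0 < x := one_pos.trans hx
  have hxs : x < x ^ s := by simpa using Real.rpow_lt_rpow_of_exponent_lt hx hs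
  have hterm (e : ℕ) : x ^ e / (x ^ (e + 1)) ^ s = (x / x ^ s) ^ e * (x ^ s)⁻¹ := by
    rw [← Real.rpow_pow_comm hx₀.le, div_pow, pow_succ]
    field_simp
  have hratio : x / x ^ s < 1 := (div_lt_one (hx₀.trans hxs)).2 hxs
  simp_rw [hterm]
  rw [tsum_mul_right, tsum_geometric_of_lt_one (by positivity) hratio]
  field_simp

lemma summable_div_rad_div_rpow {s : ℝ} (hs : 2 < s) :
    Summable fun n : ℕ ↦ ((n / rad n : ℕ) : ℝ) / (n : ℝ) ^ s := by
  refine .of_nonneg_of_le (fun n ↦ by positivity) (fun n ↦ ?_)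
    (Real.summable_nat_rpow.2 (by linarith : 1 - s < -1))
  rcases n.eq_zero_or_pos with rfl | hn
  · simp [Real.rpow_nonneg]
  have hn' : (0 : ℝ) < n := by exact_mod_cast hn
  calc ((n / rad n : ℕ) : ℝ) / (n : ℝ) ^ s ≤ n / (n : ℝ) ^ s := by
        gcongr; exact_mod_cast Nat.div_le_self n (rad n)
    _ = (n : ℝ) ^ (1 - s) := by rw [Real.rpow_sub hn', Real.rpow_one]

theorem stmt_10 (s : ℝ) (hs : 2 < s) :
    ∑' n : ℕ, ((n / rad n : ℕ) : ℝ) / (n : ℝ) ^ s =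
      ∏' p : Nat.Primes, (1 + 1 / ((p : ℝ) ^ s - (p : ℝ))) := by
  set f : ℕ → ℝ := fun n ↦ ((n / rad n : ℕ) : ℝ) / (n : ℝ) ^ s
  have hsum : Summable f := summable_div_rad_div_rpow hs
  have hmul {m n : ℕ} (h : m.Coprime n) : f (m * n) = f m * f n := by
    simp only [f, div_rad_mul_of_coprime h, Nat.cast_mul,
      Real.mul_rpow (Nat.cast_nonneg m) (Nat.cast_nonneg n)]
    ring
  rw [← EulerProduct.eulerProduct_tprod (by simp [f]) hmul hsum.norm (by simp [f])]
  refine tprod_congr fun p ↦ ?_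
  have hp : 1 < (p : ℝ) := by exact_mod_cast p.prop.one_lt
  have hlocal : Summable fun e : ℕ ↦ f (p ^ e) :=
    hsum.comp_injective (Nat.pow_right_injective p.prop.two_le)
  rw [hlocal.tsum_eq_zero_add]
  simp only [f, prime_pow_succ_div_rad p.prop, Nat.cast_pow,
    tsum_pow_div_pow_succ_rpow hp (by linarith)]
  simp
end

section
/- Let m be a positive integer with canonical factorization ∏_{i=1}^k p_i^{e_i}, let a be coprime to m, and let n be any natural number. Set T = ∏ p_i (the radical of m), let e = max e_i, write n = M·φ(T) + r with 0 ≤ r < φ(T), and write a^{φ(T)} = 1 + T·s. Then a^n ≡ a^r · ∑_{i=0}^{e-1} C(M, i)·(T·s)^i (mod m). -/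
open Finset

/- Since `a ^ φ(T) = 1 + T s`, we get `a ^ n = a ^ r (1 + T s) ^ M`. Every prime power `p_i ^ e_i`
divides `T ^ e`, so `m ∣ T ^ e` and `T s` is nilpotent of order at most `e` modulo `m`: the binomial
expansion of `(1 + T s) ^ M` modulo `m` stops after its first `e` terms. -/

theorem one_add_pow_eq_sum_range_of_pow_eq_zero {R : Type*} [CommSemiring R] {x : R} {N : ℕ}
    (hx : x ^ N = 0) (M : ℕ) :
    (1 + x) ^ M = ∑ i ∈ range N, (M.choose i : R) * x ^ i := by
  have hvanish : ∀ i ∈ range (M + 1 + N), i ∉ range N → (M.choose i : R) * x ^ i = 0 :=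
    fun i _ hi => by
      rw [pow_eq_zero_of_le (by simpa using hi) hx, mul_zero]
  have hchoose : ∀ i ∈ range (M + 1 + N), i ∉ range (M + 1) → (M.choose i : R) * x ^ i = 0 :=
    fun i _ hi => by
      rw [Nat.choose_eq_zero_of_lt (by simpa [Nat.lt_succ_iff] using hi), Nat.cast_zero, zero_mul]
  calc (1 + x) ^ M = ∑ i ∈ range (M + 1), (M.choose i : R) * x ^ i := by
        rw [add_comm, add_pow]
        simp only [one_pow, mul_one, mul_comm]
    _ = ∑ i ∈ range (M + 1 + N), (M.choose i : R) * x ^ i :=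
        sum_subset (range_subset_range.2 (Nat.le_add_right _ _)) hchoose
    _ = ∑ i ∈ range N, (M.choose i : R) * x ^ i :=
        (sum_subset (range_subset_range.2 (Nat.le_add_left _ _)) hvanish).symm

theorem prod_pow_dvd_prod_pow_sup {ι M : Type*} [CommMonoid M] (s : Finset ι) (p : ι → M)
    (e : ι → ℕ) : ∏ i ∈ s, p i ^ e i ∣ (∏ i ∈ s, p i) ^ s.sup e := by
  rw [← prod_pow]
  exact prod_dvd_prod_of_dvd _ _ fun i hi => pow_dvd_pow _ (le_sup hi)

theorem stmt_13_general (k : ℕ) (p e : Fin k → ℕ)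
    (m T emax a n M r : ℕ) (s : ℤ)
    (hm : m = ∏ i, p i ^ e i) (hT : T = ∏ i, p i)
    (hemax : emax = Finset.univ.sup e)
    (hn : n = M * Nat.totient T + r)
    (hs : (a : ℤ) ^ Nat.totient T = 1 + T * s) :
    (a : ZMod m) ^ n =
      (a : ZMod m) ^ r *
        ∑ i ∈ Finset.range emax, (Nat.choose M i : ZMod m) * ((((T : ℤ) * s : ℤ) : ZMod m)) ^ i := by
  have hT_pow : (T : ZMod m) ^ emax = 0 := by
    rw [← Nat.cast_pow, ZMod.natCast_eq_zero_iff, hm, hT, hemax]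
    exact prod_pow_dvd_prod_pow_sup _ _ _
  have hnil : ((((T : ℤ) * s : ℤ) : ZMod m)) ^ emax = 0 := by
    push_cast
    rw [mul_pow, hT_pow, zero_mul]
  have ha_totient : (a : ZMod m) ^ Nat.totient T = 1 + (((T : ℤ) * s : ℤ) : ZMod m) := by
    exact_mod_cast congrArg (fun z : ℤ => (z : ZMod m)) hs
  rw [← one_add_pow_eq_sum_range_of_pow_eq_zero hnil, ← ha_totient, hn, pow_add, mul_comm M, pow_mul,
    mul_comm]

theorem stmt_13 (k : ℕ) (p e : Fin k → ℕ) (hp : ∀ i, (p i).Prime)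
    (hinj : Function.Injective p) (he : ∀ i, 1 ≤ e i)
    (m T emax a n M r : ℕ) (s : ℤ)
    (hm : m = ∏ i, p i ^ e i) (hT : T = ∏ i, p i)
    (hemax : emax = Finset.univ.sup e)
    (ha : Nat.Coprime a m)
    (hn : n = M * Nat.totient T + r) (hr : r < Nat.totient T)
    (hs : (a : ℤ) ^ Nat.totient T = 1 + T * s) :
    (a : ZMod m) ^ n =
      (a : ZMod m) ^ r *
        ∑ i ∈ Finset.range emax, (Nat.choose M i : ZMod m) * ((((T : ℤ) * s : ℤ) : ZMod m)) ^ i :=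
  stmt_13_general k p e m T emax a n M r s hm hT hemax hn hs
end
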